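/- Let l1 and l2 be two grid lines of the triangular grid having no grid point in common, and let P be a path on the triangular grid that contains at least one edge lying on l1 and at least one edge lying on l2. Then P has at least two bends. -/

import Mathlib

/-- The triangular grid: the simple graph on `ℤ × ℤ` where two points are adjacent
iff their difference is `±(1,0)`, `±(0,1)` or `±(1,1)`. -/
def TGrid : SimpleGraph (ℤ × ℤ) where
  Adj u v :=
    (v.1 - u.1 = 1 ∧ v.2 - u.2 = 0) ∨ (v.1 - u.1 = -1 ∧ v.2 - u.2 = 0) ∨
    (v.1 - u.1 = 0 ∧ v.2 - u.2 = 1) ∨ (v.1 - u.1 = 0 ∧ v.2 - u.2 = -1) ∨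
    (v.1 - u.1 = 1 ∧ v.2 - u.2 = 1) ∨ (v.1 - u.1 = -1 ∧ v.2 - u.2 = -1)
  symm := by constructor; intro u v h; omega
  loopless := by constructor; intro u h; omega

/-- The (symmetric) direction datum of a grid edge: the pair of absolute coordinate
differences.  For grid edges this is `(1,0)` (horizontal), `(0,1)` (vertical) or
`(1,1)` (diagonal). -/
def edir (e : Sym2 (ℤ × ℤ)) : ℤ × ℤ :=
  Sym2.lift ⟨fun u v => (|u.1 - v.1|, |u.2 - v.2|), by
    intro u v; simp [abs_sub_comm]⟩ e

/-- The `t`-th edge of a walk. -/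
def wEdge {u v : ℤ × ℤ} (p : TGrid.Walk u v) (t : ℕ) : Sym2 (ℤ × ℤ) :=
  s(p.getVert t, p.getVert (t + 1))

/-- The number of bends of a walk: the number of consecutive pairs of edges with
different directions. -/
def bendCount {u v : ℤ × ℤ} (p : TGrid.Walk u v) : ℕ :=
  (List.range (p.length - 1)).countP
    (fun i => decide (edir (wEdge p i) ≠ edir (wEdge p (i + 1))))

/-- `b` is a bend point of the walk `p`. -/
def IsBendAt {u v : ℤ × ℤ} (p : TGrid.Walk u v) (b : ℤ × ℤ) : Prop :=
  ∃ i : ℕ, i + 2 ≤ p.length ∧ p.getVert (i + 1) = b ∧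
    edir (wEdge p i) ≠ edir (wEdge p (i + 1))

/-- A (nontrivial simple) path on the triangular grid. -/
structure TPath where
  src : ℤ × ℤ
  dst : ℤ × ℤ
  walk : TGrid.Walk src dst
  isPath : walk.IsPath
  nontriv : 0 < walk.length

/-- The set of grid edges of a path. -/
def pEdges (P : TPath) : Set (Sym2 (ℤ × ℤ)) := {e | e ∈ P.walk.edges}

/-- The set of grid points of a path. -/
def pPts (P : TPath) : Set (ℤ × ℤ) := {q | q ∈ P.walk.support}

/-- A segment of a path: a maximal straight (bend-free) subpath, recorded by the
interval of edge indices `[i, j)` it occupies. -/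
structure Segment (P : TPath) where
  i : ℕ
  j : ℕ
  lt : i < j
  le : j ≤ P.walk.length
  straight : ∀ t, i ≤ t → t < j → edir (wEdge P.walk t) = edir (wEdge P.walk i)
  maxLeft : i = 0 ∨ edir (wEdge P.walk (i - 1)) ≠ edir (wEdge P.walk i)
  maxRight : j = P.walk.length ∨ edir (wEdge P.walk (j - 1)) ≠ edir (wEdge P.walk j)

/-- The set of grid edges of a segment. -/
def Segment.edges {P : TPath} (s : Segment P) : Set (Sym2 (ℤ × ℤ)) :=
  {e | ∃ t, s.i ≤ t ∧ t < s.j ∧ e = wEdge P.walk t}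

/-- The set of grid points of a segment. -/
def Segment.pts {P : TPath} (s : Segment P) : Set (ℤ × ℤ) :=
  {q | ∃ t, s.i ≤ t ∧ t ≤ s.j ∧ q = P.walk.getVert t}

/-- The direction of a segment. -/
def Segment.dir {P : TPath} (s : Segment P) : ℤ × ℤ := edir (wEdge P.walk s.i)

/-- The three directions of the triangular grid. -/
inductive Dir | H | V | D
deriving DecidableEq

/-- The direction of the (straight) line from `a` to `b`. -/
def dirOf (a b : ℤ × ℤ) : Dir :=
  if a.2 = b.2 then .H else if a.1 = b.1 then .V else .D

/-- A grid line of the triangular grid: a full horizontal, vertical or diagonal line. -/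
structure GridLine where
  dir : Dir
  c : ℤ

/-- The parametrization of the points of a grid line. -/
def GridLine.pt (l : GridLine) (t : ℤ) : ℤ × ℤ :=
  match l.dir with
  | .H => (t, l.c)
  | .V => (l.c, t)
  | .D => (l.c + t, t)

/-- The `t`-th edge of a grid line. -/
def GridLine.edge (l : GridLine) (t : ℤ) : Sym2 (ℤ × ℤ) := s(l.pt t, l.pt (t + 1))

/-- The set of grid points of a grid line. -/
def GridLine.pts (l : GridLine) : Set (ℤ × ℤ) := Set.range l.pt

/-- The set of grid edges of a grid line. -/
def GridLine.edges (l : GridLine) : Set (Sym2 (ℤ × ℤ)) := Set.range l.edge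

/-- A right triangle of the triangular grid, given by a base corner `p`, a leg
length `k ≥ 1`, and one of the two possible orientations. -/
structure RightTri where
  p : ℤ × ℤ
  k : ℤ
  hk : 1 ≤ k
  orientA : Bool

/-- The set of grid edges of a right triangle. -/
def RightTri.edges (T : RightTri) : Set (Sym2 (ℤ × ℤ)) :=
  if T.orientA then
    {e | ∃ t : ℤ, 0 ≤ t ∧ t < T.k ∧
      (e = s((T.p.1 + t, T.p.2), (T.p.1 + t + 1, T.p.2)) ∨
       e = s((T.p.1 + T.k, T.p.2 + t), (T.p.1 + T.k, T.p.2 + t + 1)) ∨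
       e = s((T.p.1 + t, T.p.2 + t), (T.p.1 + t + 1, T.p.2 + t + 1)))}
  else
    {e | ∃ t : ℤ, 0 ≤ t ∧ t < T.k ∧
      (e = s((T.p.1, T.p.2 + t), (T.p.1, T.p.2 + t + 1)) ∨
       e = s((T.p.1 + t, T.p.2 + T.k), (T.p.1 + t + 1, T.p.2 + T.k)) ∨
       e = s((T.p.1 + t, T.p.2 + t), (T.p.1 + t + 1, T.p.2 + t + 1)))}

/-- The three corners of a right triangle. -/
def RightTri.corners (T : RightTri) : Set (ℤ × ℤ) :=
  if T.orientA then {T.p, (T.p.1 + T.k, T.p.2), (T.p.1 + T.k, T.p.2 + T.k)}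
  else {T.p, (T.p.1, T.p.2 + T.k), (T.p.1 + T.k, T.p.2 + T.k)}

/-- `U(𝒫)`: the subgraph of the grid formed by all segments of members of the family
that share at least one grid edge with another member, given by its set of edges. -/
def UEdges {ι : Type} (P : ι → TPath) : Set (Sym2 (ℤ × ℤ)) :=
  {e | ∃ i : ι, ∃ s : Segment (P i), e ∈ s.edges ∧
        ∃ j : ι, j ≠ i ∧ (s.edges ∩ pEdges (P j)).Nonempty}

/-- A B₁-EPGₜ representation of a simple graph `G`: a family of at most-one-bend
paths on the triangular grid whose edge-intersection graph is `G`. -/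
def IsB1EPGtRep {V : Type} (G : SimpleGraph V) (Rep : V → TPath) : Prop :=
  (∀ v, bendCount (Rep v).walk ≤ 1) ∧
  ∀ u v : V, u ≠ v → (G.Adj u v ↔ (pEdges (Rep u) ∩ pEdges (Rep v)).Nonempty)

/-! With at most one bend, the edges from an edge on `l1` up to a later edge on `l2` split into a
run in the direction of `l1` followed by a run in the direction of `l2`. A straight run stays on a
single grid line, so the vertex where the two runs meet lies on both lines. -/

namespace Dir

/-- The value of `edir` on the edges of direction `d`. -/
def vec : Dir → ℤ × ℤ
  | H => (1, 0)
  | V => (0, 1)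
  | D => (1, 1)

/-- The grid lines of direction `d` are the level sets of `d.level`. -/
def level : Dir → ℤ × ℤ → ℤ
  | H, q => q.2
  | V, q => q.1
  | D, q => q.1 - q.2

theorem level_eq_of_adj {d : Dir} {u v : ℤ × ℤ} (hadj : TGrid.Adj u v)
    (hd : edir s(u, v) = d.vec) : d.level u = d.level v := by
  have h1 : |u.1 - v.1| = d.vec.1 := congrArg Prod.fst hd
  have h2 : |u.2 - v.2| = d.vec.2 := congrArg Prod.snd hd
  simp only [TGrid] at hadj
  cases d <;> simp only [vec, level] at h1 h2 ⊢ <;>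
    rcases abs_cases (u.1 - v.1) with ⟨_, _⟩ | ⟨_, _⟩ <;>
    rcases abs_cases (u.2 - v.2) with ⟨_, _⟩ | ⟨_, _⟩ <;> omega

end Dir

namespace GridLine

variable {l : GridLine}

theorem mem_pts_iff {q : ℤ × ℤ} : q ∈ l.pts ↔ l.dir.level q = l.c := by
  obtain ⟨d, c⟩ := l
  obtain ⟨x, y⟩ := q
  cases d <;> simp only [pts, pt, Dir.level, Set.mem_range, Prod.ext_iff] <;>
    exact ⟨fun ⟨t, ht⟩ => by omega, fun h => by first | exact ⟨x, by omega⟩ | exact ⟨y, by omega⟩⟩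

theorem edir_of_mem_edges {e : Sym2 (ℤ × ℤ)} (he : e ∈ l.edges) : edir e = l.dir.vec := by
  obtain ⟨t, rfl⟩ := he
  obtain ⟨d, c⟩ := l
  cases d <;> simp [edge, pt, edir, Dir.vec]

theorem mem_pts_of_mem_edges {e : Sym2 (ℤ × ℤ)} {x : ℤ × ℤ} (he : e ∈ l.edges) (hx : x ∈ e) :
    x ∈ l.pts := by
  obtain ⟨t, rfl⟩ := he
  rcases Sym2.mem_iff.1 hx with rfl | rfl <;> exact Set.mem_range_self _

end GridLine

namespace SimpleGraph.Walk

variable {u v : ℤ × ℤ} (w : TGrid.Walk u v)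

theorem exists_wEdge_eq_of_mem_edges {e : Sym2 (ℤ × ℤ)} (he : e ∈ w.edges) :
    ∃ t < w.length, wEdge w t = e := by
  obtain ⟨t, ht, rfl⟩ := List.mem_iff_getElem.1 he
  exact ⟨t, w.length_edges ▸ ht, (getElem_edges ht).symm⟩

theorem level_getVert_eq_of_forall_edir_eq {d : Dir} {a b : ℕ} (hab : a ≤ b) (hb : b ≤ w.length)
    (hdir : ∀ t, a ≤ t → t < b → edir (wEdge w t) = d.vec) :
    d.level (w.getVert a) = d.level (w.getVert b) := by
  induction b, hab using Nat.le_induction with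
  | base => rfl
  | succ n hn ih =>
    rw [ih (by omega) fun t h h' => hdir t h (by omega)]
    exact Dir.level_eq_of_adj (w.adj_getVert_succ (by omega)) (hdir n hn (by omega))

theorem edir_wEdge_eq_of_forall_not_bend {a b : ℕ}
    (h : ∀ i, a ≤ i → i < b → edir (wEdge w i) = edir (wEdge w (i + 1))) :
    ∀ t, a ≤ t → t ≤ b → edir (wEdge w t) = edir (wEdge w a) := by
  intro t hat htb
  induction t, hat using Nat.le_induction with
  | base => rfl
  | succ n hn ih => rw [← h n hn (by omega)]; exact ih (by omega)

theorem two_le_bendCount {i j : ℕ} (hij : i < j) (hj : j + 1 < w.length)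
    (hi_bend : edir (wEdge w i) ≠ edir (wEdge w (i + 1)))
    (hj_bend : edir (wEdge w j) ≠ edir (wEdge w (j + 1))) : 2 ≤ bendCount w := by
  have hsub : List.Subperm [i, j] <| (List.range (w.length - 1)).filter
      fun k => decide (edir (wEdge w k) ≠ edir (wEdge w (k + 1))) := by
    refine List.subperm_of_subset (by simpa using hij.ne) fun k hk => ?_
    rcases List.mem_pair.1 hk with rfl | rfl <;>
      simp only [ne_eq, decide_not, List.mem_filter, List.mem_range, decide_false, Bool.not_false,
        and_true, hi_bend, hj_bend] <;> omega
  rw [bendCount, List.countP_eq_length_filter]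
  simpa using hsub.length_le

theorem exists_split_of_bendCount_le_one (hw : bendCount w ≤ 1) {a b : ℕ} (hab : a ≤ b)
    (hb : b < w.length) :
    ∃ m, a ≤ m ∧ m ≤ b ∧ (∀ t, a ≤ t → t < m → edir (wEdge w t) = edir (wEdge w a)) ∧
      ∀ t, m ≤ t → t ≤ b → edir (wEdge w t) = edir (wEdge w b) := by
  by_cases hbend : ∃ c, a ≤ c ∧ c < b ∧ edir (wEdge w c) ≠ edir (wEdge w (c + 1))
  · obtain ⟨c, hac, hcb, hc⟩ := hbend
    have hunique : ∀ i, i + 1 < w.length → i ≠ c →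
        edir (wEdge w i) = edir (wEdge w (i + 1)) := by
      intro i hi hic
      by_contra hi_bend
      rcases hic.lt_or_gt with h | h
      · exact absurd (two_le_bendCount w h (by omega) hi_bend hc) (by omega)
      · exact absurd (two_le_bendCount w h hi hc hi_bend) (by omega)
    refine ⟨c + 1, by omega, hcb, fun t hat htc => ?_, fun t hct htb => ?_⟩
    · exact edir_wEdge_eq_of_forall_not_bend w (b := c)
        (fun i _ _ => hunique i (by omega) (by omega)) t hat (by omega)
    · have hconst := edir_wEdge_eq_of_forall_not_bend w (a := c + 1) (b := b)
        (fun i _ _ => hunique i (by omega) (by omega))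
      rw [hconst t hct htb, hconst b hcb le_rfl]
  · push Not at hbend
    refine ⟨b, hab, le_rfl, fun t hat htb => ?_, fun t hbt htb => by rw [le_antisymm htb hbt]⟩
    exact edir_wEdge_eq_of_forall_not_bend w hbend t hat htb.le

theorem two_le_bendCount_of_wEdge_mem_edges {l₁ l₂ : GridLine} (hdisj : l₁.pts ∩ l₂.pts = ∅)
    {a b : ℕ} (hab : a ≤ b) (hb : b < w.length) (ha₁ : wEdge w a ∈ l₁.edges)
    (hb₂ : wEdge w b ∈ l₂.edges) : 2 ≤ bendCount w := by
  by_contra! hw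
  obtain ⟨m, ham, hmb, hbefore, hafter⟩ :=
    exists_split_of_bendCount_le_one w (by omega) hab hb
  have hm₁ : w.getVert m ∈ l₁.pts := by
    rw [GridLine.mem_pts_iff, ← level_getVert_eq_of_forall_edir_eq w ham (by omega)
      fun t h h' => (hbefore t h h').trans (GridLine.edir_of_mem_edges ha₁),
      ← GridLine.mem_pts_iff]
    exact GridLine.mem_pts_of_mem_edges ha₁ (Sym2.mem_mk_left _ _)
  have hm₂ : w.getVert m ∈ l₂.pts := by
    rw [GridLine.mem_pts_iff, level_getVert_eq_of_forall_edir_eq w hmb (by omega)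
      fun t h h' => (hafter t h h'.le).trans (GridLine.edir_of_mem_edges hb₂),
      ← GridLine.mem_pts_iff]
    exact GridLine.mem_pts_of_mem_edges hb₂ (Sym2.mem_mk_left _ _)
  exact Set.eq_empty_iff_forall_notMem.1 hdisj _ ⟨hm₁, hm₂⟩

theorem two_le_bendCount_of_mem_edges {l₁ l₂ : GridLine} (hdisj : l₁.pts ∩ l₂.pts = ∅)
    {e₁ e₂ : Sym2 (ℤ × ℤ)} (he₁ : e₁ ∈ w.edges) (he₁l : e₁ ∈ l₁.edges) (he₂ : e₂ ∈ w.edges)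
    (he₂l : e₂ ∈ l₂.edges) : 2 ≤ bendCount w := by
  obtain ⟨a, ha, rfl⟩ := w.exists_wEdge_eq_of_mem_edges he₁
  obtain ⟨b, hb, rfl⟩ := w.exists_wEdge_eq_of_mem_edges he₂
  rcases le_total a b with hab | hba
  · exact w.two_le_bendCount_of_wEdge_mem_edges hdisj hab hb he₁l he₂l
  · exact w.two_le_bendCount_of_wEdge_mem_edges (Set.inter_comm l₁.pts _ ▸ hdisj) hba ha
      he₂l he₁l

end SimpleGraph.Walk

/-- If two grid lines have no common grid point, then any path
containing an edge of each has at least two bends. -/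
theorem stmt3 (l1 l2 : GridLine) (hdisj : l1.pts ∩ l2.pts = ∅)
    (P : TPath)
    (h1 : ∃ e ∈ pEdges P, e ∈ l1.edges)
    (h2 : ∃ e ∈ pEdges P, e ∈ l2.edges) :
    2 ≤ bendCount P.walk := by
  obtain ⟨e₁, he₁, he₁l⟩ := h1
  obtain ⟨e₂, he₂, he₂l⟩ := h2
  exact P.walk.two_le_bendCount_of_mem_edges hdisj he₁ he₁l he₂ he₂l
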